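/- arXiv:1807.10514 — 3 statements merged into one kernel-verified Lean document; each statement's English description precedes it below -/
import Mathlib

section
/- The subdifferential of the graph total variation at zero equals the image of the unit ball of edge functions under the divergence operator: ∂J(0) = div(B₁) = {div H : H ∈ ℝ^E, |H(e)| ≤ 1 for all e ∈ E}. -/
open Finset MeasureTheory

noncomputable section

/-- The graph total variation `J(u) = ∑_{(v,w) ∈ E} |u(w) - u(v)|`. -/
def tvJ {V : Type*} (E : Finset (V × V)) (u : V → ℝ) : ℝ :=
  ∑ e ∈ E, |u e.2 - u e.1|

/-- The subdifferential of the graph total variation at `u`. -/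
def subdiffJ {V : Type*} [Fintype V] (E : Finset (V × V)) (u : V → ℝ) : Set (V → ℝ) :=
  {us | ∀ h : V → ℝ, (∑ v, (h v - u v) * us v) + tvJ E u ≤ tvJ E h}

/-- The divergence of an edge function `H`:
`(div H)(v) = ∑_{(w,v) ∈ E} H((w,v)) - ∑_{(v,w) ∈ E} H((v,w))`. -/
def gdiv {V : Type*} [DecidableEq V] (E : Finset (V × V)) (H : V × V → ℝ) : V → ℝ :=
  fun v => (∑ e ∈ E, if e.2 = v then H e else 0) - (∑ e ∈ E, if e.1 = v then H e else 0)

/-- The ℓ² norm on `ℝ^V`. -/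
def norm2 {V : Type*} [Fintype V] (u : V → ℝ) : ℝ :=
  Real.sqrt (∑ v, (u v) ^ 2)

/-- `u` minimizes `w ↦ ½‖f - w‖₂² + α J(w)` over `ℝ^V`. -/
def IsROFMinimizer {V : Type*} [Fintype V] (E : Finset (V × V)) (f : V → ℝ) (α : ℝ)
    (u : V → ℝ) : Prop :=
  ∀ w : V → ℝ,
    (1 / 2) * (∑ v, (f v - u v) ^ 2) + α * tvJ E u ≤
      (1 / 2) * (∑ v, (f v - w v) ^ 2) + α * tvJ E w

/-- `u : [0,∞) → ℝ^V` is a TV flow solution with datum `f`: it is Lipschitz on `[0,∞)`,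
`u(0) = f`, and `-u'(t) ∈ ∂J(u(t))` for almost every `t > 0`. -/
def IsTVFlowSolution {V : Type*} [Fintype V] (E : Finset (V × V)) (f : V → ℝ)
    (u : ℝ → V → ℝ) : Prop :=
  u 0 = f ∧ (∃ L : NNReal, LipschitzOnWith L u (Set.Ici 0)) ∧
    ∃ u' : ℝ → V → ℝ, ∀ᵐ t ∂(volume : Measure ℝ), 0 < t →
      HasDerivAt u (u' t) t ∧ (fun v => -(u' t v)) ∈ subdiffJ E (u t)

/-!
By summation by parts, `⟨h, div H⟩ = ∑_{(v,w) ∈ E} H(v,w) (h(w) - h(v)) ≤ J(h)` whenever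
`H ∈ B₁`, with equality for `H = sign (h(w) - h(v))`. So `J` is the support function of
`div(B₁)`, and `∂J(0) = {u* | ⟨h, u*⟩ ≤ J(h) for all h}` consists of the points that no
linear functional separates from `div(B₁)`. As a linear image of a compact cube, `div(B₁)` is
closed and convex, so by Hahn–Banach these are exactly its points.
-/

section GraphDivergence

variable {V : Type*} [DecidableEq V] (E : Finset (V × V))

def gdivLinear : (V × V → ℝ) →ₗ[ℝ] V → ℝ where
  toFun := gdiv E
  map_add' H₁ H₂ := by
    funext v
    simp only [gdiv, Pi.add_apply, ite_add_zero, sum_add_distrib]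
    ring
  map_smul' c H := by
    funext v
    simp only [gdiv, Pi.smul_apply, smul_eq_mul, RingHom.id_apply, mul_sub, mul_sum, mul_ite,
      mul_zero]

theorem gdiv_congr {H₁ H₂ : V × V → ℝ} (hH : ∀ e ∈ E, H₁ e = H₂ e) : gdiv E H₁ = gdiv E H₂ := by
  funext v
  simp only [gdiv]
  congr 1 <;> exact sum_congr rfl fun e he => by rw [hH e he]

variable [Fintype V]

theorem sum_mul_gdiv (H : V × V → ℝ) (h : V → ℝ) :
    ∑ v, h v * gdiv E H v = ∑ e ∈ E, H e * (h e.2 - h e.1) := by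
  simp only [gdiv, mul_sub, mul_sum, mul_ite, mul_zero]
  rw [sum_sub_distrib, sum_comm, sum_comm (s := univ)]
  simp [mul_comm]

/-- Values off `E` do not enter `gdiv E`, so the unbounded constraint set may be replaced by a
compact ball. -/
theorem gdiv_image_eq_image_closedBall :
    gdiv E '' {H : V × V → ℝ | ∀ e ∈ E, |H e| ≤ 1} = gdiv E '' Metric.closedBall 0 1 := by
  apply Set.Subset.antisymm
  · rintro _ ⟨H, hH, rfl⟩
    refine ⟨fun e => if e ∈ E then H e else 0, ?_, gdiv_congr E fun e he => if_pos he⟩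
    refine mem_closedBall_zero_iff.2 <| (pi_norm_le_iff_of_nonneg zero_le_one).2 fun e => ?_
    split_ifs with he
    · exact hH e he
    · simp
  · rintro _ ⟨H, hH, rfl⟩
    exact ⟨H, fun e _ => (norm_le_pi_norm H e).trans (mem_closedBall_zero_iff.1 hH), rfl⟩

theorem isClosed_gdiv_image_unitBall :
    IsClosed (gdiv E '' {H : V × V → ℝ | ∀ e ∈ E, |H e| ≤ 1}) := by
  rw [gdiv_image_eq_image_closedBall]
  exact ((isCompact_closedBall 0 1).image (gdivLinear E).continuous_of_finiteDimensional).isClosed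

theorem convex_gdiv_image_unitBall :
    Convex ℝ (gdiv E '' {H : V × V → ℝ | ∀ e ∈ E, |H e| ≤ 1}) := by
  rw [gdiv_image_eq_image_closedBall]
  exact (convex_closedBall 0 1).linear_image (gdivLinear E)

end GraphDivergence

section Subdifferential

variable {V : Type*} [Fintype V] (E : Finset (V × V))

theorem mem_subdiffJ_zero_iff {us : V → ℝ} :
    us ∈ subdiffJ E 0 ↔ ∀ h : V → ℝ, ∑ v, h v * us v ≤ tvJ E h := by
  simp [subdiffJ, tvJ]

variable [DecidableEq V]

theorem sum_mul_gdiv_le_tvJ {H : V × V → ℝ} (hH : ∀ e ∈ E, |H e| ≤ 1) (h : V → ℝ) :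
    ∑ v, h v * gdiv E H v ≤ tvJ E h := by
  rw [sum_mul_gdiv, tvJ]
  refine sum_le_sum fun e he => ?_
  calc H e * (h e.2 - h e.1) ≤ |H e| * |h e.2 - h e.1| := by rw [← abs_mul]; exact le_abs_self _
    _ ≤ |h e.2 - h e.1| := mul_le_of_le_one_left (abs_nonneg _) (hH e he)

theorem exists_sum_mul_gdiv_eq_tvJ (h : V → ℝ) :
    ∃ H : V × V → ℝ, (∀ e ∈ E, |H e| ≤ 1) ∧ ∑ v, h v * gdiv E H v = tvJ E h := by
  refine ⟨fun e => SignType.sign (h e.2 - h e.1), fun e _ => ?_, ?_⟩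
  · rcases lt_trichotomy (h e.2 - h e.1) 0 with hd | hd | hd <;> simp [hd]
  · simp only [sum_mul_gdiv, tvJ, sign_mul_self]

end Subdifferential

theorem subdiff_at_zero_eq_div_unit_ball_general
    {V : Type*} [Fintype V] [DecidableEq V] (E : Finset (V × V)) :
    subdiffJ E (0 : V → ℝ) =
      gdiv E '' {H : V × V → ℝ | ∀ e ∈ E, |H e| ≤ 1} := by
  ext us
  refine ⟨fun hus => ?_, ?_⟩
  · rw [← iInter_halfSpaces_eq (convex_gdiv_image_unitBall E) (isClosed_gdiv_image_unitBall E)]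
    refine Set.mem_iInter.2 fun l => ?_
    set h : V → ℝ := fun v => l fun w => if v = w then 1 else 0
    have hl : ∀ x, l x = ∑ v, h v * x v := fun x => by
      simp only [h, mul_comm, ← smul_eq_mul]
      exact l.toLinearMap.pi_apply_eq_sum_univ x
    obtain ⟨H, hH, hHh⟩ := exists_sum_mul_gdiv_eq_tvJ E h
    refine ⟨gdiv E H, ⟨H, hH, rfl⟩, ?_⟩
    rw [hl, hl, hHh]
    exact (mem_subdiffJ_zero_iff E).1 hus h
  · rintro ⟨H, hH, rfl⟩
    exact (mem_subdiffJ_zero_iff E).2 (sum_mul_gdiv_le_tvJ E hH)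

/-- `∂J(0) = div(B₁)`. -/
theorem subdiff_at_zero_eq_div_unit_ball
    {V : Type*} [Fintype V] [DecidableEq V] [Nonempty V] (E : Finset (V × V))
    (hE : ∀ v w : V, (v, w) ∈ E → (w, v) ∉ E)
    (hconn : (SimpleGraph.fromRel (fun v w : V => (v, w) ∈ E)).Connected) :
    subdiffJ E (0 : V → ℝ) =
      gdiv E '' {H : V × V → ℝ | ∀ e ∈ E, |H e| ≤ 1} :=
  subdiff_at_zero_eq_div_unit_ball_general E
end
end

section
/- A bounded, closed and convex set Ω ⊆ ℝ^n is invariant φ-minimal if and only if Ω is the base polyhedron B(g) associated to some submodular set function g : 2^{{1,…,n}} → ℝ with g(∅) = 0. -/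
open Finset

noncomputable section

/-- `Ω ⊆ ℝ^n` is invariant φ-minimal: for every `a` there is `x_a ∈ Ω` minimizing
`∑ i, φ(x i - a i)` over `Ω` simultaneously for all convex `φ : ℝ → ℝ`. -/
def InvariantPhiMinimal {n : ℕ} (Ω : Set (Fin n → ℝ)) : Prop :=
  ∀ a : Fin n → ℝ, ∃ xa ∈ Ω, ∀ x ∈ Ω, ∀ φ : ℝ → ℝ, ConvexOn ℝ Set.univ φ →
    ∑ i, φ (xa i - a i) ≤ ∑ i, φ (x i - a i)

/-- A set function `g : 2^{1,…,n} → ℝ` is submodular. -/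
def Submodular {n : ℕ} (g : Finset (Fin n) → ℝ) : Prop :=
  ∀ A B : Finset (Fin n), g (A ∪ B) + g (A ∩ B) ≤ g A + g B

/-- The base polyhedron `B(g)` associated to a set function `g` with `g(∅)=0`:
`B(g) = {x ∈ P(g) : ∑_{i∈S} x_i = g(S)}` where
`P(g) = {x : ∑_{i∈A} x_i ≤ g(A) for all A ⊆ S}`. -/
def basePolyhedron {n : ℕ} (g : Finset (Fin n) → ℝ) : Set (Fin n → ℝ) :=
  {x | (∀ A : Finset (Fin n), ∑ i ∈ A, x i ≤ g A) ∧ ∑ i, x i = g Finset.univ}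

/-!
If `Ω` is invariant φ-minimal and `a` is piecewise constant with large jumps, then testing
`φ t = max (-t - b) 0` shows that the minimiser `x_a` maximises `∑ i ∈ T, x i` over `Ω`
simultaneously for every upper level set `T` of `a`. Hence `g A = max_{x ∈ Ω} ∑ i ∈ A, x i` is
submodular, and a separating hyperplane together with summation by parts gives `Ω = B(g)`.

Conversely, let `x` be the Euclidean projection of `a` onto `B(g)`. An exchange argument, and the
fact that tight sets form a lattice, show that every lower level set of `x - a` is tight.
Comparing a convex `φ` with its right derivative at `x - a` and summing by parts along these level
sets shows that `x` minimises every `∑ i, φ (x i - a i)`.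
-/

theorem sum_mul_nonneg_of_sum_filter_lt_nonpos {ι : Type*} [Fintype ι] (c w : ι → ℝ)
    (hw : ∑ i, w i = 0) (hlev : ∀ t, ∑ i with c i < t, w i ≤ 0) :
    0 ≤ ∑ i, c i * w i := by
  classical
  suffices key : ∀ V : Finset ℝ, ∀ c : ι → ℝ, (∀ i, c i ∈ V) →
      (∀ t, ∑ i with c i < t, w i ≤ 0) → 0 ≤ ∑ i, c i * w i from
    key _ c (fun i => mem_image_of_mem c (mem_univ i)) hlev
  intro V
  induction V using Finset.induction_on_max with
  | empty =>
    intro c hc _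
    have : IsEmpty ι := ⟨fun i => by simpa using hc i⟩
    simp
  | insert m V hV ih =>
    intro c hc hlev
    rcases V.eq_empty_or_nonempty with rfl | hne
    · have hcm : ∀ i, c i = m := fun i => by simpa using hc i
      simp [hcm, ← mul_sum, hw]
    -- Flatten the top value `m` of `c` down to the next value `m'`; since `∑ w = 0` this
    -- changes `∑ c w` by `(m - m') ∑_{c = m} w = -(m - m') ∑_{c < m} w ≥ 0`.
    set m' := V.max' hne
    have hm' : m' < m := hV _ (V.max'_mem hne)
    have hcV : ∀ i, c i < m → c i ∈ V := fun i hi => by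
      simpa [hi.ne] using hc i
    have hflat : ∑ i, c i * w i =
        ∑ i, min (c i) m' * w i + (m - m') * ∑ i with ¬ c i < m, w i := by
      rw [mul_sum, sum_filter, ← sum_add_distrib]
      refine sum_congr rfl fun i _ => ?_
      by_cases hi : c i < m
      · rw [min_eq_left (V.le_max' _ (hcV i hi)), if_neg (not_not.2 hi)]; ring
      · have hci : c i = m := (mem_insert.1 (hc i)).resolve_right fun h => hi (hV _ h)
        rw [if_pos hi, hci, min_eq_right hm'.le]; ring
    have htop : ∑ i with ¬ c i < m, w i = -∑ i with c i < m, w i := by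
      rw [eq_neg_iff_add_eq_zero, add_comm, sum_filter_add_sum_filter_not, hw]
    have hflat_nonneg : 0 ≤ ∑ i, min (c i) m' * w i := by
      refine ih _ (fun i => ?_) fun t => ?_
      · rcases lt_or_ge (c i) m with hi | hi
        · rw [min_eq_left (V.le_max' _ (hcV i hi))]; exact hcV i hi
        · rw [min_eq_right (hm'.le.trans hi)]; exact V.max'_mem hne
      · by_cases ht : m' < t
        · simp [ht, hw]
        · simpa [min_lt_iff, ht] using hlev t
    rw [hflat, htop]
    nlinarith [hlev m]

theorem eq_empty_or_exists_eq_filter_le {ι α : Type*} [Fintype ι] [LinearOrder α] (f : ι → α)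
    {s : Finset ι} (hs : ∀ i ∈ s, ∀ j, f j ≤ f i → j ∈ s) :
    s = ∅ ∨ ∃ i₀, s = ({i | f i ≤ f i₀} : Finset ι) := by
  rcases s.eq_empty_or_nonempty with h | hne
  · exact .inl h
  obtain ⟨i₀, hi₀, hmax⟩ := s.exists_max_image f hne
  exact .inr ⟨i₀, ext fun j => by simpa using ⟨hmax j, hs i₀ hi₀ j⟩⟩

theorem filter_le_mem_of_separating {ι α : Type*} [Fintype ι] [DecidableEq ι] [LinearOrder α]
    {p : Finset ι → Prop} (hbot : p ∅) (htop : p univ)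
    (hunion : ∀ A, p A → ∀ B, p B → p (A ∪ B)) (hinter : ∀ A, p A → ∀ B, p B → p (A ∩ B))
    (r : ι → α) (hsep : ∀ i j, r i < r j → ∃ A, p A ∧ i ∈ A ∧ j ∉ A) (s : α) :
    p {i | r i ≤ s} := by
  have hsep' : ∀ i j, ∃ A, r i < r j → p A ∧ i ∈ A ∧ j ∉ A := fun i j => by
    by_cases h : r i < r j
    · obtain ⟨A, hA⟩ := hsep i j h; exact ⟨A, fun _ => hA⟩
    · exact ⟨∅, fun h' => absurd h' h⟩
  choose A hA using hsep'
  have hrepr : ({i | r i ≤ s} : Finset ι) =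
      ({i | r i ≤ s} : Finset ι).sup fun i => ({j | s < r j} : Finset ι).inf (A i) := by
    ext k
    simp only [mem_sup, mem_inf, mem_filter, mem_univ, true_and]
    constructor
    · exact fun hk => ⟨k, hk, fun j hj => (hA k j (hk.trans_lt hj)).2.1⟩
    · rintro ⟨i, hi, hk⟩
      by_contra! hks
      exact (hA i k (hi.trans_lt hks)).2.2 (hk k hks)
  rw [hrepr]
  refine sup_induction hbot hunion fun i hi => inf_induction htop hinter fun j hj => ?_
  simp only [mem_filter, mem_univ, true_and] at hi hj
  exact (hA i j (hi.trans_lt hj)).1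

theorem ConvexOn.add_rightDeriv_mul_sub_le {φ : ℝ → ℝ} (hφ : ConvexOn ℝ Set.univ φ) (y z : ℝ) :
    φ y + derivWithin φ (Set.Ioi y) y * (z - y) ≤ φ z := by
  rcases lt_trichotomy y z with h | rfl | h
  · have := hφ.rightDeriv_le_slope_of_mem_interior (by simp) (Set.mem_univ z) h
    rw [slope_def_field, le_div_iff₀ (sub_pos.2 h)] at this
    linarith
  · simp
  · have := (hφ.slope_le_leftDeriv_of_mem_interior (Set.mem_univ z) (by simp) h).trans
      (hφ.leftDeriv_le_rightDeriv_of_mem_interior (by simp))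
    rw [slope_def_field, div_le_iff₀ (sub_pos.2 h)] at this
    linarith

theorem ConvexOn.monotone_rightDeriv {φ : ℝ → ℝ} (hφ : ConvexOn ℝ Set.univ φ) :
    Monotone fun y => derivWithin φ (Set.Ioi y) y := by
  simpa using hφ.monotoneOn_rightDeriv

section rank

variable {ι α : Type*} [Fintype ι] [LinearOrder α] (c : ι → α) {i j : ι}

theorem filter_le_subset_filter_le (h : c i ≤ c j) :
    ({k | c k ≤ c i} : Finset ι) ⊆ ({k | c k ≤ c j} : Finset ι) := fun k hk => by
  simp only [mem_filter, mem_univ, true_and] at hk ⊢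
  exact hk.trans h

theorem card_filter_le_lt_card_filter_le (h : c i < c j) :
    #{k | c k ≤ c i} < #{k | c k ≤ c j} :=
  card_lt_card <| (ssubset_iff_of_subset (filter_le_subset_filter_le c h.le)).2
    ⟨j, by simp, by simpa using h⟩

end rank

theorem sum_sq_add_single_sub_single {ι : Type*} [Fintype ι] [DecidableEq ι] (v : ι → ℝ)
    {i j : ι} (hij : i ≠ j) (ε : ℝ) :
    ∑ k, (v + Pi.single i ε - Pi.single j ε : ι → ℝ) k ^ 2 =
      ∑ k, v k ^ 2 + 2 * ε * (v i - v j) + 2 * ε ^ 2 := by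
  have hk : ∀ k, (v + Pi.single i ε - Pi.single j ε : ι → ℝ) k ^ 2 = v k ^ 2 +
      ((if k = i then 2 * ε * v i + ε ^ 2 else 0) +
        (if k = j then -2 * ε * v j + ε ^ 2 else 0)) := by
    intro k
    by_cases hki : k = i <;> by_cases hkj : k = j
    · exact absurd (hki.symm.trans hkj) hij
    all_goals subst_vars; simp [hij.symm, *]; try ring
  simp only [hk, sum_add_distrib, sum_ite_eq', mem_univ, if_true]
  ring

theorem sum_add_single_sub_single {ι : Type*} [DecidableEq ι] (x : ι → ℝ) (i j : ι) (ε : ℝ)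
    (A : Finset ι) :
    ∑ k ∈ A, (x + Pi.single i ε - Pi.single j ε : ι → ℝ) k =
      ∑ k ∈ A, x k + (if i ∈ A then ε else 0) - (if j ∈ A then ε else 0) := by
  simp [sum_add_distrib, sum_sub_distrib, sum_pi_single']

def IsPhiMinimizer {n : ℕ} (Ω : Set (Fin n → ℝ)) (a xa : Fin n → ℝ) : Prop :=
  xa ∈ Ω ∧ ∀ x ∈ Ω, ∀ φ : ℝ → ℝ, ConvexOn ℝ Set.univ φ →
    ∑ i, φ (xa i - a i) ≤ ∑ i, φ (x i - a i)

theorem invariantPhiMinimal_iff {n : ℕ} {Ω : Set (Fin n → ℝ)} :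
    InvariantPhiMinimal Ω ↔ ∀ a, ∃ xa, IsPhiMinimizer Ω a xa :=
  Iff.rfl

theorem isCompact_basePolyhedron {n : ℕ} (g : Finset (Fin n) → ℝ) :
    IsCompact (basePolyhedron g) := by
  have hclosed : IsClosed (basePolyhedron g) := by
    have : basePolyhedron g =
        (⋂ A : Finset (Fin n), {x | ∑ i ∈ A, x i ≤ g A}) ∩ {x | ∑ i, x i = g univ} := by
      ext; simp [basePolyhedron]
    rw [this]
    exact (isClosed_iInter fun A => isClosed_le (by fun_prop) continuous_const).inter
      (isClosed_eq (by fun_prop) continuous_const)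
  have hbox : basePolyhedron g ⊆
      Set.Icc (fun i => g univ - g (univ.erase i)) (fun i => g {i}) := by
    intro x ⟨hle, hsum⟩
    refine ⟨fun i => ?_, fun i => by simpa using hle {i}⟩
    have := add_sum_erase univ x (mem_univ i)
    linarith [hle (univ.erase i)]
  exact Metric.isCompact_of_isClosed_isBounded hclosed ((Metric.isBounded_Icc _ _).subset hbox)

section basePolyhedron

variable {n : ℕ} {g : Finset (Fin n) → ℝ}

theorem Submodular.sum_union_eq_and_sum_inter_eq (hg : Submodular g) {x : Fin n → ℝ}
    (hx : ∀ A, ∑ i ∈ A, x i ≤ g A) {A B : Finset (Fin n)}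
    (hA : ∑ i ∈ A, x i = g A) (hB : ∑ i ∈ B, x i = g B) :
    ∑ i ∈ A ∪ B, x i = g (A ∪ B) ∧ ∑ i ∈ A ∩ B, x i = g (A ∩ B) := by
  have := hg A B
  have := hx (A ∪ B)
  have := hx (A ∩ B)
  have := sum_union_inter (s₁ := A) (s₂ := B) (f := x)
  constructor <;> linarith

theorem Submodular.basePolyhedron_nonempty (hg : Submodular g) (hg0 : g ∅ = 0) :
    (basePolyhedron g).Nonempty := by
  -- the greedy base along the order of `Fin n`
  set x : Fin n → ℝ := fun i => g (Iic i) - g (Iio i)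
  have hle : ∀ A, ∑ i ∈ A, x i ≤ g A := by
    intro A
    induction A using Finset.induction_on_max with
    | empty => simp [hg0]
    | insert m s hs ih =>
      have hunion : insert m s ∪ Iio m = Iic m := by
        ext j
        have := hs j
        simp only [mem_union, mem_insert, mem_Iio, mem_Iic, le_iff_lt_or_eq]
        tauto
      have hinter : insert m s ∩ Iio m = s := by
        ext j; simpa using fun h => hs j h
      have := hg (insert m s) (Iio m)
      rw [hunion, hinter] at this
      rw [sum_insert fun h => (hs m h).false]
      linarith
  have hlower : ∀ A : Finset (Fin n), (∀ i ∈ A, ∀ j ≤ i, j ∈ A) → ∑ i ∈ A, x i = g A := by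
    intro A
    induction A using Finset.induction_on_max with
    | empty => simp [hg0]
    | insert m s hs ih =>
      intro hA
      have hs_eq : s = Iio m := by
        ext j
        refine ⟨fun h => mem_Iio.2 (hs j h), fun hj => ?_⟩
        rw [mem_Iio] at hj
        simpa [hj.ne] using hA m (mem_insert_self m s) j hj.le
      have hA_eq : insert m s = Iic m := by
        rw [hs_eq]; ext j; simp [le_iff_lt_or_eq, or_comm]
      have hs_lower : ∀ i ∈ s, ∀ j ≤ i, j ∈ s := by
        rw [hs_eq]; exact fun i hi j hj => mem_Iio.2 (hj.trans_lt (mem_Iio.1 hi))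
      rw [sum_insert fun h => (hs m h).false, ih hs_lower, hA_eq, hs_eq]
      ring
  exact ⟨x, hle, hlower univ fun _ _ j _ => mem_univ j⟩

/-- Otherwise moving a little mass from `j` to `i` stays in `B(g)` and gets closer to `a`. -/
theorem exists_tight_of_isMinOn_dist {a xs : Fin n → ℝ}
    (hxs : xs ∈ basePolyhedron g)
    (hmin : IsMinOn (fun x => ∑ k, (x k - a k) ^ 2) (basePolyhedron g) xs) {i j : Fin n}
    (hij : xs i - a i < xs j - a j) :
    ∃ A, ∑ k ∈ A, xs k = g A ∧ i ∈ A ∧ j ∉ A := by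
  by_contra! htight
  have hne : i ≠ j := by rintro rfl; exact hij.false
  have hev : ∀ᶠ ε in nhdsWithin (0 : ℝ) (Set.Ioi 0), ε < (xs j - a j) - (xs i - a i) ∧
      ∀ A : Finset (Fin n), i ∈ A → j ∉ A → ε < g A - ∑ k ∈ A, xs k := by
    refine (Filter.Eventually.and ?_ ?_).filter_mono nhdsWithin_le_nhds
    · exact eventually_lt_nhds (sub_pos.2 hij)
    · refine Filter.eventually_all.2 fun A => ?_
      by_cases hA : i ∈ A ∧ j ∉ A
      · have hslack : ∑ k ∈ A, xs k < g A :=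
          (hxs.1 A).lt_of_ne fun h => hA.2 (htight A h hA.1)
        exact (eventually_lt_nhds (sub_pos.2 hslack)).mono fun ε hε _ _ => hε
      · exact .of_forall fun ε hi hj => absurd ⟨hi, hj⟩ hA
  obtain ⟨ε, ⟨hεgap, hεslack⟩, hεpos : 0 < ε⟩ := (hev.and self_mem_nhdsWithin).exists
  set x' : Fin n → ℝ := xs + Pi.single i ε - Pi.single j ε
  have hx' : x' ∈ basePolyhedron g := by
    refine ⟨fun A => ?_, ?_⟩
    · rw [sum_add_single_sub_single]
      have := hxs.1 A
      by_cases hi : i ∈ A <;> by_cases hj : j ∈ A <;> simp only [hi, hj, if_true, if_false]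
      · linarith
      · linarith [hεslack A hi hj]
      · linarith
      · linarith
    · have := sum_add_single_sub_single xs i j ε univ
      simp only [mem_univ, if_true, add_sub_cancel_right] at this
      rw [this, hxs.2]
  have hdist := hmin hx'
  have hshift : ∀ k, x' k - a k = (xs - a + Pi.single i ε - Pi.single j ε : Fin n → ℝ) k :=
    fun k => by simp only [x', Pi.add_apply, Pi.sub_apply]; ring
  simp only [Set.mem_ofPred_eq, hshift] at hdist
  rw [sum_sq_add_single_sub_single _ hne] at hdist
  simp only [Pi.sub_apply] at hdist
  nlinarith

/-- Compare `φ` with its right-derivative subgradient at `xs - a`, then sum by parts along the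
level sets of `xs - a`. -/
theorem isPhiMinimizer_of_tight_filter_le {a xs : Fin n → ℝ}
    (hxs : xs ∈ basePolyhedron g)
    (htight : ∀ s : ℝ, ∑ i with xs i - a i ≤ s, xs i = g {i | xs i - a i ≤ s}) :
    IsPhiMinimizer (basePolyhedron g) a xs := by
  refine ⟨hxs, fun x hx φ hφ => ?_⟩
  set c : Fin n → ℝ := fun i => derivWithin φ (Set.Ioi (xs i - a i)) (xs i - a i)
  have hc : 0 ≤ ∑ i, c i * (x i - xs i) := by
    refine sum_mul_nonneg_of_sum_filter_lt_nonpos c _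
      (by rw [sum_sub_distrib, hx.2, hxs.2, sub_self]) fun t => ?_
    have hdown : ∀ i ∈ ({i | c i < t} : Finset (Fin n)), ∀ j, xs j - a j ≤ xs i - a i →
        j ∈ ({i | c i < t} : Finset (Fin n)) := by
      simp only [mem_filter, mem_univ, true_and]
      exact fun i hi j hj => (hφ.monotone_rightDeriv hj).trans_lt hi
    rcases eq_empty_or_exists_eq_filter_le (fun i => xs i - a i) hdown with h | ⟨i₀, h⟩
    · simp [h]
    · rw [h, sum_sub_distrib, htight, sub_nonpos]
      exact hx.1 _
  calc ∑ i, φ (xs i - a i) ≤ ∑ i, (φ (xs i - a i) + c i * ((x i - a i) - (xs i - a i))) := by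
        simp only [sub_sub_sub_cancel_right, sum_add_distrib]; linarith
    _ ≤ ∑ i, φ (x i - a i) := sum_le_sum fun i _ => hφ.add_rightDeriv_mul_sub_le _ _

theorem Submodular.invariantPhiMinimal_basePolyhedron (hg : Submodular g) (hg0 : g ∅ = 0) :
    InvariantPhiMinimal (basePolyhedron g) := by
  refine invariantPhiMinimal_iff.2 fun a => ?_
  obtain ⟨xs, hxs, hmin⟩ := (isCompact_basePolyhedron g).exists_isMinOn
    (hg.basePolyhedron_nonempty hg0)
    (by fun_prop : Continuous fun x : Fin n → ℝ => ∑ k, (x k - a k) ^ 2).continuousOn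
  exact ⟨xs, isPhiMinimizer_of_tight_filter_le hxs fun s =>
    filter_le_mem_of_separating (p := fun A => ∑ i ∈ A, xs i = g A) (by simp [hg0]) hxs.2
      (fun A hA B hB => (hg.sum_union_eq_and_sum_inter_eq hxs.1 hA hB).1)
      (fun A hA B hB => (hg.sum_union_eq_and_sum_inter_eq hxs.1 hA hB).2)
      _ (fun i j hij => exists_tight_of_isMinOn_dist hxs hmin hij) s⟩

end basePolyhedron

/-- The support function of `Ω` in the direction of the indicator of `A`. -/
def maxSum {n : ℕ} (Ω : Set (Fin n → ℝ)) (A : Finset (Fin n)) : ℝ :=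
  sSup ((fun x => ∑ i ∈ A, x i) '' Ω)

section maxSum

variable {n : ℕ} {Ω : Set (Fin n → ℝ)}

theorem sum_le_maxSum (hbdd : Bornology.IsBounded Ω) {x : Fin n → ℝ} (hx : x ∈ Ω)
    (A : Finset (Fin n)) : ∑ i ∈ A, x i ≤ maxSum Ω A := by
  obtain ⟨M, -, hM⟩ := hbdd.exists_pos_norm_le
  refine le_csSup ⟨∑ _i ∈ A, M, ?_⟩ (Set.mem_image_of_mem _ hx)
  rintro _ ⟨z, hz, rfl⟩
  exact sum_le_sum fun i _ => (Real.le_norm_self _).trans ((norm_le_pi_norm z i).trans (hM z hz))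

theorem maxSum_eq_of_forall_sum_le {A : Finset (Fin n)} {z : Fin n → ℝ} (hz : z ∈ Ω)
    (h : ∀ x ∈ Ω, ∑ i ∈ A, x i ≤ ∑ i ∈ A, z i) : maxSum Ω A = ∑ i ∈ A, z i :=
  IsGreatest.csSup_eq ⟨Set.mem_image_of_mem _ hz, by rintro _ ⟨x, hx, rfl⟩; exact h x hx⟩

theorem maxSum_empty (hne : Ω.Nonempty) : maxSum Ω ∅ = 0 := by
  simp [maxSum, hne.image_const]

end maxSum

section IsPhiMinimizer

variable {n : ℕ} {Ω : Set (Fin n → ℝ)} {a xa : Fin n → ℝ}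

theorem IsPhiMinimizer.sum_eq (h : IsPhiMinimizer Ω a xa) {x : Fin n → ℝ} (hx : x ∈ Ω) :
    ∑ i, x i = ∑ i, xa i := by
  have hid := h.2 x hx id (convexOn_id convex_univ)
  have hneg := h.2 x hx (fun t => -t) (concaveOn_id convex_univ).neg
  simp only [id, sum_neg_distrib, sum_sub_distrib] at hid hneg
  linarith

/-- On `Ω` the convex function `φ t = max (-t - b) 0` is affine in each coordinate of `x - a`,
with `∑ i, φ (x i - a i) = ∑ i ∈ T, (a i - b) - ∑ i ∈ T, x i`. -/
theorem IsPhiMinimizer.sum_le_of_gap (h : IsPhiMinimizer Ω a xa) {M b : ℝ}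
    (hM : ∀ x ∈ Ω, ‖x‖ ≤ M) {T : Finset (Fin n)} (hT : ∀ i ∈ T, b + M ≤ a i)
    (hTc : ∀ i ∉ T, a i ≤ b - M) {x : Fin n → ℝ} (hx : x ∈ Ω) :
    ∑ i ∈ T, x i ≤ ∑ i ∈ T, xa i := by
  have hcoord : ∀ z ∈ Ω, ∀ i, |z i| ≤ M := fun z hz i =>
    (norm_le_pi_norm z i).trans (hM z hz)
  have hφ : ∀ z ∈ Ω, ∑ i, max (-(z i - a i) - b) 0 = ∑ i ∈ T, (a i - b) - ∑ i ∈ T, z i := by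
    intro z hz
    rw [← sum_sub_distrib, ← sum_subset (subset_univ T)]
    · refine sum_congr rfl fun i hi => ?_
      rw [max_eq_left (by linarith [hT i hi, (abs_le.1 (hcoord z hz i)).2])]
      ring
    · intro i _ hi
      exact max_eq_right (by linarith [hTc i hi, (abs_le.1 (hcoord z hz i)).1])
  have := h.2 x hx (fun t => max (-t - b) 0)
    (((concaveOn_id convex_univ).neg.sub (concaveOn_const b convex_univ)).sup
      (convexOn_const 0 convex_univ))
  rw [hφ xa h.1, hφ x hx] at this
  linarith

end IsPhiMinimizer

section InvariantPhiMinimal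

variable {n : ℕ} {Ω : Set (Fin n → ℝ)}

/-- Take `a = -2M · rank c`, where `M` bounds `Ω`, so that `a` jumps by at least `2M` between
consecutive level sets of `c`. -/
theorem InvariantPhiMinimal.exists_forall_sum_filter_lt_le (hmin : InvariantPhiMinimal Ω)
    (hbdd : Bornology.IsBounded Ω) (c : Fin n → ℝ) :
    ∃ xa ∈ Ω, ∀ t, ∀ x ∈ Ω, ∑ i with c i < t, x i ≤ ∑ i with c i < t, xa i := by
  obtain ⟨M, hM0, hM⟩ := hbdd.exists_pos_norm_le
  set r : Fin n → ℝ := fun i => #{j | c j ≤ c i}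
  obtain ⟨xa, h⟩ := invariantPhiMinimal_iff.1 hmin fun i => -(2 * M) * r i
  refine ⟨xa, h.1, fun t x hx => ?_⟩
  have hdown : ∀ i ∈ ({i | c i < t} : Finset (Fin n)), ∀ j, c j ≤ c i →
      j ∈ ({i | c i < t} : Finset (Fin n)) := by
    simp only [mem_filter, mem_univ, true_and]
    exact fun i hi j hj => hj.trans_lt hi
  rcases eq_empty_or_exists_eq_filter_le c hdown with hT | ⟨i₀, hT⟩
  · simp [hT]
  rw [hT]
  refine h.sum_le_of_gap (b := -(2 * M) * r i₀ - M) hM (fun i hi => ?_) (fun i hi => ?_) hx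
  · have : r i ≤ r i₀ := by
      simp only [mem_filter, mem_univ, true_and] at hi
      simp only [r]
      exact_mod_cast card_le_card (filter_le_subset_filter_le c hi)
    nlinarith
  · have : r i₀ + 1 ≤ r i := by
      simp only [mem_filter, mem_univ, true_and, not_le] at hi
      simp only [r]
      exact_mod_cast card_filter_le_lt_card_filter_le c hi
    nlinarith

theorem InvariantPhiMinimal.submodular_maxSum (hmin : InvariantPhiMinimal Ω)
    (hbdd : Bornology.IsBounded Ω) : Submodular (maxSum Ω) := by
  intro A B
  set c : Fin n → ℝ := fun i => -((if i ∈ A then 1 else 0) + (if i ∈ B then 1 else 0))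
  obtain ⟨xa, hxa, hmax⟩ := hmin.exists_forall_sum_filter_lt_le hbdd c
  have hinter : ({i | c i < -3 / 2} : Finset (Fin n)) = A ∩ B := by
    ext i; by_cases hA : i ∈ A <;> by_cases hB : i ∈ B <;> simp [c, hA, hB] <;> norm_num
  have hunion : ({i | c i < -1 / 2} : Finset (Fin n)) = A ∪ B := by
    ext i; by_cases hA : i ∈ A <;> by_cases hB : i ∈ B <;> simp [c, hA, hB] <;> norm_num
  have h₁ := maxSum_eq_of_forall_sum_le hxa (hinter ▸ hmax (-3 / 2))
  have h₂ := maxSum_eq_of_forall_sum_le hxa (hunion ▸ hmax (-1 / 2))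
  rw [h₂, h₁, sum_union_inter]
  exact add_le_add (sum_le_maxSum hbdd hxa A) (sum_le_maxSum hbdd hxa B)

theorem InvariantPhiMinimal.subset_basePolyhedron_maxSum (hmin : InvariantPhiMinimal Ω)
    (hbdd : Bornology.IsBounded Ω) : Ω ⊆ basePolyhedron (maxSum Ω) := by
  intro x hx
  obtain ⟨xa, h⟩ := invariantPhiMinimal_iff.1 hmin 0
  refine ⟨sum_le_maxSum hbdd hx, ?_⟩
  rw [maxSum_eq_of_forall_sum_le h.1 fun z hz => (h.sum_eq hz).le, h.sum_eq hx]

/-- Separate `y ∉ Ω` from `Ω` by `c`; summing by parts along the level sets of `c` against a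
point of `Ω` maximising all of them gives the opposite inequality. -/
theorem InvariantPhiMinimal.basePolyhedron_maxSum_subset (hmin : InvariantPhiMinimal Ω)
    (hbdd : Bornology.IsBounded Ω) (hclosed : IsClosed Ω) (hconv : Convex ℝ Ω) :
    basePolyhedron (maxSum Ω) ⊆ Ω := by
  intro y hy
  by_contra hyΩ
  obtain ⟨f, u, hfy, hfΩ⟩ := geometric_hahn_banach_point_closed hconv hclosed hyΩ
  set c : Fin n → ℝ := fun i => f (Pi.single i 1)
  have hf : ∀ v, f v = ∑ i, c i * v i := fun v => by
    conv_lhs => rw [pi_eq_sum_univ' v]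
    simp [c, mul_comm]
  obtain ⟨xa, hxa, hmax⟩ := hmin.exists_forall_sum_filter_lt_le hbdd c
  obtain ⟨t₀, ht₀⟩ : ∃ t₀, ∀ i, c i < t₀ :=
    let ⟨M, hM⟩ := (Set.finite_range c).bddAbove
    ⟨M + 1, fun i => (hM ⟨i, rfl⟩).trans_lt (lt_add_one M)⟩
  have huniv : ({i | c i < t₀} : Finset (Fin n)) = univ := filter_true_of_mem fun i _ => ht₀ i
  have hcy : 0 ≤ ∑ i, c i * (y i - xa i) := by
    refine sum_mul_nonneg_of_sum_filter_lt_nonpos c _ ?_ fun t => ?_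
    · rw [sum_sub_distrib, hy.2, maxSum_eq_of_forall_sum_le hxa (huniv ▸ hmax t₀), sub_self]
    · rw [sum_sub_distrib, sub_nonpos, ← maxSum_eq_of_forall_sum_le hxa (hmax t)]
      exact hy.1 _
  have := hfΩ xa hxa
  rw [hf] at hfy this
  simp only [mul_sub, sum_sub_distrib] at hcy
  linarith

end InvariantPhiMinimal

/-- a bounded, closed and convex set `Ω ⊆ ℝ^n` is invariant φ-minimal iff it is
the base polyhedron of some submodular set function `g` with `g(∅) = 0`. -/
theorem invariantPhiMinimal_iff_basePolyhedron
    {n : ℕ} (Ω : Set (Fin n → ℝ))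
    (hbdd : Bornology.IsBounded Ω) (hclosed : IsClosed Ω) (hconv : Convex ℝ Ω) :
    InvariantPhiMinimal Ω ↔
      ∃ g : Finset (Fin n) → ℝ, Submodular g ∧ g ∅ = 0 ∧ Ω = basePolyhedron g := by
  constructor
  · intro hmin
    obtain ⟨x₀, hx₀, -⟩ := hmin 0
    exact ⟨maxSum Ω, hmin.submodular_maxSum hbdd, maxSum_empty ⟨x₀, hx₀⟩,
      (hmin.subset_basePolyhedron_maxSum hbdd).antisymm
        (hmin.basePolyhedron_maxSum_subset hbdd hclosed hconv)⟩
  · rintro ⟨g, hg, hg0, rfl⟩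
    exact hg.invariantPhiMinimal_basePolyhedron hg0
end
end

section
/- For every f ∈ ℝ^V, α ≥ 0 and every convex function φ : ℝ → ℝ, the ROF minimizer u_α satisfies Σ_{v∈V} φ(u_α(v)) = min{ Σ_{v∈V} φ(u(v)) : u ∈ f − α∂J(0) }. -/
open Finset MeasureTheory

noncomputable section

/-! For `α > 0`, first-order optimality of the ROF problem gives `p := α⁻¹ • (f - u_α) ∈ ∂J(u_α)`,
so `p ∈ ∂J(0)` and `u_α = f - α • p`. For monotone `g`, the perturbation `u_α - s • (g ∘ u_α)`
with small `s > 0` keeps the sign of every edge jump, so `J` is affine along it; this yields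
`⟨g ∘ u_α, q⟩ ≤ J(g ∘ u_α) ≤ ⟨g ∘ u_α, p⟩` for every `q ∈ ∂J(0)`. Taking for `g` the right
derivative of `φ`, a monotone subgradient, the subgradient inequality gives for `u = f - α • q`
`∑ φ(u) ≥ ∑ φ(u_α) + α ⟨g ∘ u_α, p - q⟩ ≥ ∑ φ(u_α)`. -/

open Set Filter Topology

namespace ConvexOn

theorem add_rightDeriv_mul_sub_le_s7 {φ : ℝ → ℝ} (hφ : ConvexOn ℝ univ φ) (x y : ℝ) :
    φ x + derivWithin φ (Ioi x) x * (y - x) ≤ φ y := by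
  rcases lt_trichotomy x y with hxy | rfl | hyx
  · have h := hφ.rightDeriv_le_slope_of_mem_interior (by simp) (mem_univ y) hxy
    rw [slope_def_field, le_div_iff₀ (sub_pos.2 hxy)] at h
    linarith
  · simp
  · have h := (hφ.slope_le_leftDeriv_of_mem_interior (mem_univ y) (by simp) hyx).trans
      (hφ.leftDeriv_le_rightDeriv_of_mem_interior (by simp))
    rw [slope_def_field, div_le_iff₀ (sub_pos.2 hyx)] at h
    linarith

theorem sum_le_sum_of_forall_monotone_dotProduct_nonneg {ι : Type*} [Fintype ι] {φ : ℝ → ℝ}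
    (hφ : ConvexOn ℝ univ φ) {u w : ι → ℝ}
    (h : ∀ g : ℝ → ℝ, Monotone g → 0 ≤ (g ∘ u) ⬝ᵥ (w - u)) :
    ∑ i, φ (u i) ≤ ∑ i, φ (w i) := by
  set g : ℝ → ℝ := fun x => derivWithin φ (Ioi x) x
  have hg : Monotone g := by
    simpa [monotoneOn_univ] using hφ.monotoneOn_rightDeriv
  calc ∑ i, φ (u i) ≤ ∑ i, φ (u i) + (g ∘ u) ⬝ᵥ (w - u) := le_add_of_nonneg_right (h g hg)
    _ = ∑ i, (φ (u i) + g (u i) * (w i - u i)) := by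
      simp [dotProduct, Finset.sum_add_distrib]
    _ ≤ ∑ i, φ (w i) := sum_le_sum fun i _ => hφ.add_rightDeriv_mul_sub_le_s7 _ _

end ConvexOn

section TotalVariation

variable {V : Type*} (E : Finset (V × V))

@[simp]
theorem tvJ_zero : tvJ E (0 : V → ℝ) = 0 := by
  simp [tvJ]

theorem tvJ_nonneg (u : V → ℝ) : 0 ≤ tvJ E u :=
  sum_nonneg fun _ _ => abs_nonneg _

theorem tvJ_add_le (u h : V → ℝ) : tvJ E (u + h) ≤ tvJ E u + tvJ E h := by
  rw [tvJ, tvJ, tvJ, ← sum_add_distrib]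
  refine sum_le_sum fun e _ => ?_
  simpa only [Pi.add_apply, add_sub_add_comm] using abs_add_le _ _

theorem tvJ_smul (c : ℝ) (u : V → ℝ) : tvJ E (c • u) = |c| * tvJ E u := by
  simp only [tvJ, mul_sum, Pi.smul_apply, smul_eq_mul, ← mul_sub, abs_mul]

theorem tvJ_add_smul_sub_le {t : ℝ} (ht₀ : 0 ≤ t) (ht₁ : t ≤ 1) (u h : V → ℝ) :
    tvJ E (u + t • (h - u)) ≤ (1 - t) * tvJ E u + t * tvJ E h := by
  have hconv : u + t • (h - u) = (1 - t) • u + t • h := by module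
  calc tvJ E (u + t • (h - u)) ≤ tvJ E ((1 - t) • u) + tvJ E (t • h) :=
        hconv ▸ tvJ_add_le E _ _
    _ = (1 - t) * tvJ E u + t * tvJ E h := by
      rw [tvJ_smul, tvJ_smul, abs_of_nonneg (sub_nonneg.2 ht₁), abs_of_nonneg ht₀]

theorem eventually_abs_sub_smul_comp_eq {g : ℝ → ℝ} (hg : Monotone g) (x y : ℝ) :
    ∀ᶠ s in 𝓝[>] (0 : ℝ), |(y - s * g y) - (x - s * g x)| = |y - x| - s * |g y - g x| := by
  wlog hxy : x ≤ y generalizing x y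
  · filter_upwards [this y x (le_of_not_ge hxy)] with s hs
    rw [abs_sub_comm, hs, abs_sub_comm y, abs_sub_comm (g y)]
  rcases hxy.eq_or_lt with rfl | hxy
  · exact Eventually.of_forall fun s => by simp
  have hlim : Tendsto (fun s : ℝ => s * (g y - g x)) (𝓝[>] 0) (𝓝 0) := by
    simpa using ((tendsto_id (x := 𝓝 (0 : ℝ))).mul_const (g y - g x)).mono_left nhdsWithin_le_nhds
  filter_upwards [hlim.eventually (gt_mem_nhds (sub_pos.2 hxy)), self_mem_nhdsWithin]
    with s hs (hs₀ : 0 < s)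
  rw [abs_of_pos (sub_pos.2 hxy), abs_of_nonneg (sub_nonneg.2 (hg hxy.le)),
    abs_of_nonneg (by linarith)]
  ring

theorem exists_pos_tvJ_sub_smul_comp {g : ℝ → ℝ} (hg : Monotone g) (u : V → ℝ) :
    ∃ s > 0, tvJ E (u - s • (g ∘ u)) = tvJ E u - s * tvJ E (g ∘ u) := by
  have hedges := (eventually_all_finset E).2
    fun e _ => eventually_abs_sub_smul_comp_eq hg (u e.1) (u e.2)
  obtain ⟨s, hs, hs₀⟩ := (hedges.and self_mem_nhdsWithin).exists
  refine ⟨s, hs₀, ?_⟩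
  simp only [tvJ, mul_sum, ← sum_sub_distrib]
  exact sum_congr rfl hs

end TotalVariation

section Subdifferential

variable {V : Type*} [Fintype V] (E : Finset (V × V))

theorem mem_subdiffJ_iff {u p : V → ℝ} :
    p ∈ subdiffJ E u ↔ ∀ h : V → ℝ, (h - u) ⬝ᵥ p + tvJ E u ≤ tvJ E h :=
  Iff.rfl

variable {E}

theorem zero_mem_subdiffJ_zero : (0 : V → ℝ) ∈ subdiffJ E 0 := by
  simpa [mem_subdiffJ_iff] using tvJ_nonneg E

theorem subdiffJ_subset_subdiffJ_zero (u : V → ℝ) : subdiffJ E u ⊆ subdiffJ E 0 := by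
  intro p hp
  rw [mem_subdiffJ_iff] at hp ⊢
  intro h
  have := hp (u + h)
  rw [add_sub_cancel_left] at this
  rw [sub_zero, tvJ_zero, add_zero]
  linarith [tvJ_add_le E u h]

theorem tvJ_comp_le_dotProduct {u p : V → ℝ} (hp : p ∈ subdiffJ E u) {g : ℝ → ℝ}
    (hg : Monotone g) : tvJ E (g ∘ u) ≤ (g ∘ u) ⬝ᵥ p := by
  obtain ⟨s, hs₀, hs⟩ := exists_pos_tvJ_sub_smul_comp E hg u
  have h := (mem_subdiffJ_iff E).1 hp (u - s • (g ∘ u))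
  rw [hs, sub_sub_cancel_left, neg_dotProduct, smul_dotProduct, smul_eq_mul] at h
  exact le_of_mul_le_mul_left (by linarith) hs₀

theorem comp_dotProduct_sub_nonneg {u p q : V → ℝ} (hp : p ∈ subdiffJ E u)
    (hq : q ∈ subdiffJ E 0) {g : ℝ → ℝ} (hg : Monotone g) : 0 ≤ (g ∘ u) ⬝ᵥ (p - q) := by
  have hq' := (mem_subdiffJ_iff E).1 hq (g ∘ u)
  rw [sub_zero, tvJ_zero, add_zero] at hq'
  rw [dotProduct_sub]
  linarith [tvJ_comp_le_dotProduct hp hg]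

end Subdifferential

namespace IsROFMinimizer

variable {V : Type*} [Fintype V] {E : Finset (V × V)} {f u : V → ℝ} {α : ℝ}

theorem eq_of_zero (hu : IsROFMinimizer E f 0 u) : u = f := by
  have hsq : ∑ v, (f v - u v) ^ 2 ≤ 0 := by
    have := hu f
    simp only [sub_self, ne_eq, OfNat.ofNat_ne_zero, not_false_eq_true, zero_pow, sum_const_zero,
      mul_zero, zero_mul, add_zero] at this
    linarith
  have hzero := (Fintype.sum_eq_zero_iff_of_nonneg fun v => sq_nonneg (f v - u v)).1
    (hsq.antisymm (sum_nonneg fun v _ => sq_nonneg _))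
  funext v
  simpa [sub_eq_zero, eq_comm] using congrFun hzero v

/-- First-order optimality: compare `u` with `u + t • (h - u)` and let `t → 0⁺`. -/
theorem inv_smul_sub_mem_subdiffJ (hα : 0 < α) (hu : IsROFMinimizer E f α u) :
    α⁻¹ • (f - u) ∈ subdiffJ E u := by
  rw [mem_subdiffJ_iff]
  intro h
  set d := h - u
  set X := (f - u) ⬝ᵥ d + α * tvJ E u - α * tvJ E h
  have hvar : ∀ t, 0 < t → t ≤ 1 → X ≤ t * (d ⬝ᵥ d / 2) := by
    intro t ht₀ ht₁
    have hexp : ∑ v, (f v - (u + t • d) v) ^ 2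
        = ∑ v, (f v - u v) ^ 2 - 2 * t * ((f - u) ⬝ᵥ d) + t ^ 2 * (d ⬝ᵥ d) := by
      simp only [dotProduct, mul_sum, ← sum_sub_distrib, ← sum_add_distrib]
      refine sum_congr rfl fun v _ => ?_
      simp only [Pi.add_apply, Pi.smul_apply, Pi.sub_apply, smul_eq_mul]
      ring
    have hmin := hu (u + t • d)
    rw [hexp] at hmin
    have hJ := tvJ_add_smul_sub_le E ht₀.le ht₁ u h
    refine le_of_mul_le_mul_left ?_ ht₀
    nlinarith
  have hX : X ≤ 0 := by
    have hlim : Tendsto (fun t : ℝ => t * (d ⬝ᵥ d / 2)) (𝓝[>] 0) (𝓝 0) := by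
      simpa using ((tendsto_id (x := 𝓝 (0 : ℝ))).mul_const (d ⬝ᵥ d / 2)).mono_left
        nhdsWithin_le_nhds
    refine ge_of_tendsto hlim ?_
    filter_upwards [Ioc_mem_nhdsGT one_pos] with t ht using hvar t ht.1 ht.2
  have hinv : α⁻¹ * ((f - u) ⬝ᵥ d) ≤ tvJ E h - tvJ E u := by
    rw [inv_mul_le_iff₀ hα]
    linarith
  rw [dotProduct_smul, smul_eq_mul, dotProduct_comm]
  linarith

end IsROFMinimizer

theorem rof_minimizer_universal_minimality_general
    {V : Type*} [Fintype V] (E : Finset (V × V))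
    (f : V → ℝ) (α : ℝ) (hα : 0 ≤ α)
    (uα : V → ℝ) (huα : IsROFMinimizer E f α uα)
    (φ : ℝ → ℝ) (hφ : ConvexOn ℝ Set.univ φ) :
    uα ∈ (fun us => f - α • us) '' subdiffJ E (0 : V → ℝ) ∧
      ∀ u ∈ (fun us => f - α • us) '' subdiffJ E (0 : V → ℝ),
        ∑ v, φ (uα v) ≤ ∑ v, φ (u v) := by
  rcases hα.eq_or_lt with rfl | hpos
  · obtain rfl := huα.eq_of_zero
    refine ⟨⟨0, zero_mem_subdiffJ_zero, by simp⟩, ?_⟩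
    rintro _ ⟨q, -, rfl⟩
    simp
  set p := α⁻¹ • (f - uα)
  have hp : p ∈ subdiffJ E uα := huα.inv_smul_sub_mem_subdiffJ hpos
  have hfp : f - α • p = uα := by simp [p, smul_smul, hpos.ne']
  refine ⟨⟨p, subdiffJ_subset_subdiffJ_zero uα hp, hfp⟩, ?_⟩
  rintro _ ⟨q, hq, rfl⟩
  refine hφ.sum_le_sum_of_forall_monotone_dotProduct_nonneg fun g hg => ?_
  have hdiff : f - α • q - uα = α • (p - q) := by rw [← hfp]; module
  rw [hdiff, dotProduct_smul, smul_eq_mul]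
  exact mul_nonneg hpos.le (comp_dotProduct_sub_nonneg hp hq hg)

/-- the ROF minimizer `u_α` simultaneously minimizes `∑_v φ(u(v))` over
`f - α ∂J(0)` for every convex `φ : ℝ → ℝ`. -/
theorem rof_minimizer_universal_minimality
    {V : Type*} [Fintype V] [DecidableEq V] [Nonempty V] (E : Finset (V × V))
    (hE : ∀ v w : V, (v, w) ∈ E → (w, v) ∉ E)
    (hconn : (SimpleGraph.fromRel (fun v w : V => (v, w) ∈ E)).Connected)
    (f : V → ℝ) (α : ℝ) (hα : 0 ≤ α)
    (uα : V → ℝ) (huα : IsROFMinimizer E f α uα)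
    (φ : ℝ → ℝ) (hφ : ConvexOn ℝ Set.univ φ) :
    uα ∈ (fun us => f - α • us) '' subdiffJ E (0 : V → ℝ) ∧
      ∀ u ∈ (fun us => f - α • us) '' subdiffJ E (0 : V → ℝ),
        ∑ v, φ (uα v) ≤ ∑ v, φ (u v) :=
  rof_minimizer_universal_minimality_general E f α hα uα huα φ hφ
end
end
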